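/- If K is a simplicial complex in which every vertex has degree at least 2 in the 1-skeleton, then the Morse complex M(K) is minimal, i.e., M(K) contains no dominated vertices. In particular, M(K) is not strongly collapsible. -/

import Mathlib

open Finset

/-- An abstract simplicial complex on vertex type `V`. -/
structure SComplex (V : Type*) where
  faces : Finset V → Prop
  not_empty : ¬ faces ∅
  down_closed : ∀ {σ τ : Finset V}, faces τ → σ ⊆ τ → σ.Nonempty → faces σ

/-- The complex generated by a set of simplices (downward closure). -/
def ofGens {V : Type*} (gens : Set (Finset V)) : SComplex V where
  faces σ := σ.Nonempty ∧ ∃ τ ∈ gens, σ ⊆ τ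
  not_empty h := by simpa using h.1
  down_closed := by
    rintro σ τ ⟨-, τ', hτ', hsub'⟩ hsub hne
    exact ⟨hne, τ', hτ', hsub.trans hsub'⟩

/-- A primitive (gradient) vector field on `K`: a single regular pair `(σ, τ)`
with `σ` a codimension-one face of `τ`. -/
structure VPair {V : Type*} (K : SComplex V) where
  lo : Finset V
  hi : Finset V
  lo_face : K.faces lo
  hi_face : K.faces hi
  lo_sub : lo ⊆ hi
  card_eq : hi.card = lo.card + 1

noncomputable instance {V : Type*} (K : SComplex V) : DecidableEq (VPair K) :=
  Classical.decEq _

/-- Two primitive pairs share no simplex. -/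
def VPair.Compatible {V : Type*} {K : SComplex V} (p q : VPair K) : Prop :=
  p.lo ≠ q.lo ∧ p.lo ≠ q.hi ∧ p.hi ≠ q.lo ∧ p.hi ≠ q.hi

/-- A discrete vector field: each simplex occurs in at most one pair. -/
def IsDVF {V : Type*} {K : SComplex V} (W : Set (VPair K)) : Prop :=
  ∀ p ∈ W, ∀ q ∈ W, p ≠ q → VPair.Compatible p q

/-- Existence of a nontrivial closed `V`-path. -/
def HasClosedPath {V : Type*} {K : SComplex V} (W : Set (VPair K)) : Prop :=
  ∃ k : ℕ, 0 < k ∧ ∃ c : ZMod k → VPair K, (∀ i, c i ∈ W) ∧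
    ∀ i, (c (i + 1)).lo ⊆ (c i).hi ∧ (c (i + 1)).lo ≠ (c i).lo ∧
      (c (i + 1)).lo.card + 1 = (c i).hi.card

/-- A gradient vector field: a discrete vector field with no nontrivial closed path. -/
def IsGVF {V : Type*} {K : SComplex V} (W : Set (VPair K)) : Prop :=
  IsDVF W ∧ ¬ HasClosedPath W

/-- The Morse complex of `K`: vertices are primitive gradient vector fields,
simplices are gradient vector fields. -/
def MorseComplex {V : Type*} (K : SComplex V) : SComplex (VPair K) where
  faces S := S.Nonempty ∧ IsGVF {p | p ∈ S}
  not_empty h := by simpa using h.1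
  down_closed := by
    rintro σ τ ⟨hne', hdvf, hnc⟩ hsub hne
    refine ⟨hne, fun p hp q hq hpq => hdvf p (hsub hp) q (hsub hq) hpq, fun h => hnc ?_⟩
    obtain ⟨k, hk, c, hc, hpath⟩ := h
    exact ⟨k, hk, c, fun i => hsub (hc i), hpath⟩

/-- The pure Morse complex: the subcomplex of `MorseComplex K` generated by the
facets of maximum dimension (maximum gradient vector fields). -/
def pureMorse {V : Type*} (K : SComplex V) : SComplex (VPair K) where
  faces S := (MorseComplex K).faces S ∧ ∃ T : Finset (VPair K), S ⊆ T ∧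
      (MorseComplex K).faces T ∧
      ∀ T' : Finset (VPair K), (MorseComplex K).faces T' → T'.card ≤ T.card
  not_empty h := (MorseComplex K).not_empty h.1
  down_closed := by
    rintro σ τ ⟨hτ, T, hsub', hT, hmax⟩ hsub hne
    exact ⟨(MorseComplex K).down_closed hτ hsub hne, T, hsub.trans hsub', hT, hmax⟩

/-- `σ` is a facet (maximal simplex) of `K`. -/
def IsFacet {V : Type*} (K : SComplex V) (σ : Finset V) : Prop :=
  K.faces σ ∧ ∀ τ, K.faces τ → σ ⊆ τ → σ = τ

/-- `w` dominates `w'`: every facet containing `w'` contains `w`. -/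
def Dominates {V : Type*} (K : SComplex V) (w w' : V) : Prop :=
  ∀ σ, IsFacet K σ → w' ∈ σ → w ∈ σ

/-- `K` is minimal: no vertex dominates another vertex. -/
def MinimalComplex {V : Type*} (K : SComplex V) : Prop :=
  ∀ w w' : V, K.faces {w} → K.faces {w'} → w ≠ w' → ¬ Dominates K w w'

/-- Strong collapsibility of a face predicate: a sequence of removals of
dominated vertices reaching a single point. -/
inductive SCAux {V : Type*} : (Finset V → Prop) → Prop
  | point (F : Finset V → Prop) (v : V) (h : ∀ σ, F σ ↔ σ = {v}) : SCAux F
  | step (F : Finset V → Prop) (w w' : V) (hne : w ≠ w') (hw : F {w}) (hw' : F {w'})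
      (hdom : ∀ σ, (F σ ∧ ∀ τ, F τ → σ ⊆ τ → σ = τ) → w' ∈ σ → w ∈ σ)
      (h : SCAux (fun σ => F σ ∧ w' ∉ σ)) : SCAux F

def StronglyCollapsible {V : Type*} (K : SComplex V) : Prop := SCAux K.faces

/-- `F` strongly collapses to `G` by a sequence of removals of dominated vertices. -/
inductive SCTo {V : Type*} : (Finset V → Prop) → (Finset V → Prop) → Prop
  | refl (F : Finset V → Prop) : SCTo F F
  | step (F G : Finset V → Prop) (w w' : V) (hne : w ≠ w') (hw : F {w}) (hw' : F {w'})
      (hdom : ∀ σ, (F σ ∧ ∀ τ, F τ → σ ⊆ τ → σ = τ) → w' ∈ σ → w ∈ σ)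
      (h : SCTo (fun σ => F σ ∧ w' ∉ σ) G) : SCTo F G

/-- Collapsibility (Forman): removal of free pairs down to a point. -/
inductive CollAux {V : Type*} : (Finset V → Prop) → Prop
  | point (F : Finset V → Prop) (v : V) (h : ∀ σ, F σ ↔ σ = {v}) : CollAux F
  | step (F : Finset V → Prop) (σ τ : Finset V) (hστ : σ ⊂ τ) (hσ : F σ) (hτ : F τ)
      (hfree : ∀ ρ, F ρ → σ ⊂ ρ → ρ = τ)
      (h : CollAux (fun ρ => F ρ ∧ ρ ≠ σ ∧ ρ ≠ τ)) : CollAux F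

def Collapsible {V : Type*} (K : SComplex V) : Prop := CollAux K.faces

/-- The degree of a vertex: the number of edges of `K` containing it. -/
noncomputable def sdeg {V : Type*} (K : SComplex V) (x : V) : ℕ :=
  Set.ncard {σ : Finset V | K.faces σ ∧ σ.card = 2 ∧ x ∈ σ}

/-- Image of a finset, with a classical decidability instance. -/
noncomputable def fimage {V W : Type*} (f : V → W) (σ : Finset V) : Finset W :=
  haveI := Classical.decEq W
  σ.image f

/-- An isomorphism between two simplicial complexes given by face predicates. -/
structure ComplexIso {V W : Type*} (F : Finset V → Prop) (G : Finset W → Prop) where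
  toFun : V → W
  invFun : W → V
  left_inv : ∀ x, F {x} → invFun (toFun x) = x
  right_inv : ∀ y, G {y} → toFun (invFun y) = y
  map_face : ∀ σ, F σ → G (fimage toFun σ)
  inv_face : ∀ τ, G τ → F (fimage invFun τ)

/-- The join of two simplicial complexes. -/
def sJoin {V W : Type*} [DecidableEq V] [DecidableEq W] (K : SComplex V) (L : SComplex W) :
    SComplex (V ⊕ W) :=
  ofGens {σ | ∃ α β, (K.faces α ∨ α = ∅) ∧ (L.faces β ∨ β = ∅) ∧
    σ = α.image Sum.inl ∪ β.image Sum.inr}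

/-- The disjoint union of two simplicial complexes. -/
def sDisjUnion {V W : Type*} [DecidableEq V] [DecidableEq W] (K : SComplex V) (L : SComplex W) :
    SComplex (V ⊕ W) :=
  ofGens ({σ | ∃ α, K.faces α ∧ σ = α.image Sum.inl} ∪
          {σ | ∃ β, L.faces β ∧ σ = β.image Sum.inr})

/-- The simplicial complex of a simple graph (vertices and edges). -/
def graphComplex {V : Type*} [DecidableEq V] (G : SimpleGraph V) : SComplex V :=
  ofGens ({σ | ∃ x, σ = {x}} ∪ {σ | ∃ x y, G.Adj x y ∧ σ = ({x, y} : Finset V)})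

/-- Attach a leaf (pendant edge) to `K` at the vertex `x`. -/
def attachLeaf {V : Type*} [DecidableEq V] (K : SComplex V) (x : V) : SComplex (V ⊕ Unit) :=
  ofGens ({σ | ∃ α, K.faces α ∧ σ = α.image Sum.inl} ∪
          {({Sum.inl x, Sum.inr ()} : Finset (V ⊕ Unit))})

/-- The cycle graph on `ZMod n`. -/
def cycleGraph (n : ℕ) : SimpleGraph (ZMod n) :=
  SimpleGraph.fromRel (fun i j => j = i + 1)

/-- Attach one new leaf to every vertex of a graph. -/
def addLeaves {V : Type*} [DecidableEq V] (G : SimpleGraph V) : SComplex (V ⊕ V) :=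
  ofGens ({σ | ∃ x y, G.Adj x y ∧ σ = ({Sum.inl x, Sum.inl y} : Finset (V ⊕ V))} ∪
          {σ | ∃ u, σ = ({Sum.inl u, Sum.inr u} : Finset (V ⊕ V))})

/-- The geometric realization of `K`, inside `V → ℝ`. -/
def realization {V : Type*} (K : SComplex V) : Set (V → ℝ) :=
  {f | ∃ σ, K.faces σ ∧ (∀ x, 0 ≤ f x) ∧ (∀ x, f x ≠ 0 → x ∈ σ) ∧ ∑ x ∈ σ, f x = 1}

/-- A Hasse-diagram edge of a poset: a covering pair. -/
structure HEdge (P : Type*) [PartialOrder P] where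
  lo : P
  hi : P
  cov : lo ⋖ hi

noncomputable instance {P : Type*} [PartialOrder P] : DecidableEq (HEdge P) :=
  Classical.decEq _

def HEdge.Compat {P : Type*} [PartialOrder P] (p q : HEdge P) : Prop :=
  p.lo ≠ q.lo ∧ p.lo ≠ q.hi ∧ p.hi ≠ q.lo ∧ p.hi ≠ q.hi

def HasPosetCycle {P : Type*} [PartialOrder P] (W : Set (HEdge P)) : Prop :=
  ∃ k : ℕ, 0 < k ∧ ∃ c : ZMod k → HEdge P, (∀ i, c i ∈ W) ∧
    ∀ i, (c (i + 1)).lo ⋖ (c i).hi ∧ (c (i + 1)).lo ≠ (c i).lo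

/-- The generalized Morse complex `f(P)` of a poset: simplices are acyclic
matchings of the Hasse diagram of `P`. -/
def genMorse (P : Type*) [PartialOrder P] : SComplex (HEdge P) where
  faces S := S.Nonempty ∧ (∀ p ∈ S, ∀ q ∈ S, p ≠ q → HEdge.Compat p q) ∧
    ¬ HasPosetCycle {p | p ∈ S}
  not_empty h := by simpa using h.1
  down_closed := by
    rintro σ τ ⟨-, hm, hc⟩ hsub hne
    refine ⟨hne, fun p hp q hq h => hm p (hsub hp) q (hsub hq) h, fun h => hc ?_⟩
    obtain ⟨k, hk, c, hc', hp⟩ := h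
    exact ⟨k, hk, c, fun i => hsub (hc' i), hp⟩

/-- The automorphism group of a simplicial complex, as a subgroup of `Perm V`. -/
def autGroup {V : Type*} [DecidableEq V] (K : SComplex V) : Subgroup (Equiv.Perm V) where
  carrier := {e | ∀ σ : Finset V, K.faces σ ↔ K.faces (σ.image e)}
  one_mem' := by intro σ; simp
  mul_mem' := by
    intro a b ha hb σ
    rw [hb σ, ha (σ.image b)]
    simp [Finset.image_image, Equiv.Perm.coe_mul]
  inv_mem' := by
    intro a ha σ
    have := ha (σ.image ⇑a⁻¹)
    simpa [Finset.image_image, Function.comp_def, Equiv.Perm.inv_def, Equiv.apply_symm_apply,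
      Finset.image_id'] using this.symm

/-- The full subcomplex of `K` on a set `S` of vertices. -/
def restrictTo {V : Type*} (K : SComplex V) (S : Set V) : Finset V → Prop :=
  fun σ => K.faces σ ∧ ∀ x ∈ σ, x ∈ S

/-- `S` spans a fully connected subcomplex: `K = (K∣S) * (K∣Sᶜ)`. -/
def FullyConnected {V : Type*} [DecidableEq V] (K : SComplex V) (S : Set V) : Prop :=
  ∀ σ : Finset V, K.faces σ ↔ (σ.Nonempty ∧ ∃ α β : Finset V,
    (restrictTo K S α ∨ α = ∅) ∧ ((K.faces β ∧ ∀ x ∈ β, x ∉ S) ∨ β = ∅) ∧ σ = α ∪ β)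

/-- The primitive pair `(x, xy)` on an edge `{x,y}`. -/
def edgePair {V : Type*} [DecidableEq V] (K : SComplex V) (x y : V) (hxy : x ≠ y)
    (h : K.faces {x, y}) : VPair K where
  lo := {x}
  hi := {x, y}
  lo_face := K.down_closed h (by simp) (Finset.singleton_nonempty x)
  hi_face := h
  lo_sub := by simp
  card_eq := by
    rw [Finset.card_singleton, Finset.card_insert_of_notMem (by simp [hxy]),
      Finset.card_singleton]

/-!
If `w` dominated `w' ≠ w` in `M(K)`, then adding `w` to any gradient vector field containing `w'`
would again give a gradient vector field. When `w` and `w'` share a simplex, `{w'}` already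
refutes this. Otherwise we find a primitive pair `p` compatible with `w'` that shares a simplex
with `w = (σ, τ)`: a pair `(ρ, σ)` with `ρ` a codimension-one face of `σ` if `dim σ ≥ 1`; and if
`w = (x, xy)`, either `(y, xy)` or, when `w' = (y, ·)`, a pair `(x, xz)` along a second edge at
`x`, which exists because `x` has degree at least 2. Two compatible primitive pairs admit no closed `V`-path, so
`{w', p}` is a simplex of `M(K)` whose extension by `w` is not.

A minimal complex with at least two vertices is not strongly collapsible, and `M(K)` has at
least two vertices as soon as it has one.
-/

namespace Finset

variable {α : Type*} [DecidableEq α]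

lemma eq_union_of_card_eq_succ {σ ρ τ : Finset α} (hσ : σ ⊆ τ) (hρ : ρ ⊆ τ) (hne : σ ≠ ρ)
    (hcard : σ.card = ρ.card) (hτ : τ.card = σ.card + 1) : τ = σ ∪ ρ := by
  have hssub : σ ⊂ σ ∪ ρ := by
    refine ssubset_iff_subset_ne.mpr ⟨subset_union_left, fun h => hne ?_⟩
    exact (eq_of_subset_of_card_le (union_eq_left.mp h.symm) hcard.le).symm
  have := card_lt_card hssub
  exact (eq_of_subset_of_card_le (union_subset hσ hρ) (by omega)).symm

lemma exists_eq_pair_of_card_eq_two {s : Finset α} {x : α} (hs : s.card = 2) (hx : x ∈ s) :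
    ∃ y, y ≠ x ∧ s = {x, y} := by
  obtain ⟨a, b, hab, rfl⟩ := card_eq_two.mp hs
  rcases mem_insert.mp hx with rfl | hx
  · exact ⟨b, hab.symm, rfl⟩
  · rw [mem_singleton.mp hx, pair_comm]
    exact ⟨a, hab, rfl⟩

end Finset

open Finset

namespace SComplex

variable {V : Type*} (K : SComplex V)

lemma nonempty_of_faces {σ : Finset V} (hσ : K.faces σ) : σ.Nonempty :=
  nonempty_iff_ne_empty.mpr fun h => K.not_empty (h ▸ hσ)

lemma exists_isFacet_superset [Finite V] {σ : Finset V} (hσ : K.faces σ) :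
    ∃ τ, σ ⊆ τ ∧ IsFacet K τ := by
  obtain ⟨τ, hστ, hτ⟩ := Finite.exists_le_maximal (p := K.faces) hσ
  exact ⟨τ, hστ, hτ.1, fun ρ hρ hτρ => le_antisymm hτρ (hτ.2 hρ hτρ)⟩

lemma exists_edge_ne [DecidableEq V] {x : V} (hdeg : 2 ≤ sdeg K x) (τ : Finset V) :
    ∃ z, z ≠ x ∧ K.faces {x, z} ∧ {x, z} ≠ τ := by
  obtain ⟨e, ⟨he, hcard, hxe⟩, heτ⟩ := Set.exists_ne_of_one_lt_ncard (by omega : 1 < sdeg K x) τ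
  obtain ⟨z, hzx, rfl⟩ := exists_eq_pair_of_card_eq_two hcard hxe
  exact ⟨z, hzx, he, heτ⟩

end SComplex

lemma Dominates.insert_faces {V : Type*} [Finite V] [DecidableEq V] {K : SComplex V} {w w' : V}
    (hdom : Dominates K w w') {σ : Finset V} (hσ : K.faces σ) (hw' : w' ∈ σ) :
    K.faces (insert w σ) := by
  obtain ⟨τ, hστ, hτ⟩ := K.exists_isFacet_superset hσ
  exact K.down_closed hτ.1 (insert_subset (hdom τ hτ (hστ hw')) hστ) (insert_nonempty _ _)

lemma MinimalComplex.not_stronglyCollapsible {V : Type*} {K : SComplex V}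
    (hmin : MinimalComplex K) (hK : ∀ v, K.faces {v} → ∃ w, K.faces {w} ∧ w ≠ v) :
    ¬ StronglyCollapsible K := by
  rintro (⟨_, v, hv⟩ | ⟨_, w, w', hne, hw, hw', hdom, -⟩)
  · obtain ⟨w, hw, hwv⟩ := hK v ((hv _).mpr rfl)
    exact hwv (singleton_inj.mp ((hv _).mp hw))
  · exact hmin w w' hw hw' hne hdom

namespace VPair

variable {V : Type*} {K : SComplex V}

instance [Finite V] : Finite (VPair K) :=
  Finite.of_injective (fun p : VPair K => (p.lo, p.hi)) fun p q h => by
    cases p; cases q; simp_all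

lemma lo_ne_hi (p : VPair K) : p.lo ≠ p.hi := fun h => by
  have := p.card_eq; rw [h] at this; omega

lemma two_le_card_hi (p : VPair K) : 2 ≤ p.hi.card := by
  have := (K.nonempty_of_faces p.lo_face).card_pos
  have := p.card_eq
  omega

lemma Compatible.symm {p q : VPair K} (h : Compatible p q) : Compatible q p :=
  ⟨h.1.symm, h.2.2.1.symm, h.2.1.symm, h.2.2.2.symm⟩

def eraseLo [DecidableEq V] {τ : Finset V} (hτ : K.faces τ) {x : V} (hx : x ∈ τ)
    (h2 : 2 ≤ τ.card) : VPair K where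
  lo := τ.erase x
  hi := τ
  lo_face := K.down_closed hτ (erase_subset x τ)
    (card_pos.mp (by rw [card_erase_of_mem hx]; omega))
  hi_face := hτ
  lo_sub := erase_subset x τ
  card_eq := by rw [card_erase_of_mem hx]; omega

lemma exists_ne (v : VPair K) : ∃ p : VPair K, p ≠ v := by
  classical
  obtain ⟨x, hx⟩ := K.nonempty_of_faces v.lo_face
  exact ⟨eraseLo v.hi_face (v.lo_sub hx) v.two_le_card_hi,
    fun h => notMem_erase x v.hi (by rw [← h] at hx; exact hx)⟩

variable {w w' : VPair K}

lemma exists_ne_not_compatible_compatible_of_two_le_card_lo [DecidableEq V]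
    (hc : Compatible w w') (h2 : 2 ≤ w.lo.card) :
    ∃ p, p ≠ w ∧ ¬ Compatible p w ∧ Compatible p w' := by
  obtain ⟨x₁, hx₁, x₂, hx₂, hx₁₂⟩ := one_lt_card.mp h2
  have hconflict : ∀ x (hx : x ∈ w.lo),
      eraseLo w.lo_face hx h2 ≠ w ∧ ¬ Compatible (eraseLo w.lo_face hx h2) w :=
    fun x hx => ⟨fun h => w.lo_ne_hi (congrArg hi h), fun h => h.2.2.1 rfl⟩
  have hmeets : ∀ x (hx : x ∈ w.lo), ¬ Compatible (eraseLo w.lo_face hx h2) w' →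
      w.lo.erase x = w'.lo ∨ w.lo.erase x = w'.hi := by
    intro x hx hnc
    by_contra! h
    exact hnc ⟨h.1, h.2, hc.1, hc.2.1⟩
  by_contra! hno
  have hcard := w'.card_eq
  have hcard₁ := card_erase_of_mem hx₁
  have hcard₂ := card_erase_of_mem hx₂
  have hinj : w.lo.erase x₁ ≠ w.lo.erase x₂ := fun h => hx₁₂ ((erase_inj _ hx₁).mp h)
  -- two distinct codimension-one faces of `w.lo` cannot both lie in `{w'.lo, w'.hi}`
  rcases hmeets x₁ hx₁ (hno _ (hconflict x₁ hx₁).1 (hconflict x₁ hx₁).2) with h₁ | h₁ <;>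
    rcases hmeets x₂ hx₂ (hno _ (hconflict x₂ hx₂).1 (hconflict x₂ hx₂).2) with h₂ | h₂
  · exact hinj (h₁.trans h₂.symm)
  · rw [h₁] at hcard₁; rw [h₂] at hcard₂; omega
  · rw [h₁] at hcard₁; rw [h₂] at hcard₂; omega
  · exact hinj (h₁.trans h₂.symm)

lemma exists_ne_not_compatible_compatible_of_card_lo_eq_one [DecidableEq V]
    (hdeg : ∀ x : V, K.faces {x} → 2 ≤ sdeg K x) (hc : Compatible w w') (h1 : w.lo.card = 1) :
    ∃ p, p ≠ w ∧ ¬ Compatible p w ∧ Compatible p w' := by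
  obtain ⟨x, hx⟩ := card_eq_one.mp h1
  have hxhi : x ∈ w.hi := w.lo_sub (hx ▸ mem_singleton_self x)
  obtain ⟨y, hyx, hhi⟩ := exists_eq_pair_of_card_eq_two (by rw [w.card_eq, h1]) hxhi
  by_cases hy : w'.lo = {y}
  · -- `({y}, {x, y})` is taken by `w'`, so use another edge `{x, z}` at `x`
    obtain ⟨z, hzx, hxz, hne⟩ := K.exists_edge_ne (hdeg x (hx ▸ w.lo_face)) w.hi
    refine ⟨edgePair K x z hzx.symm hxz, fun h => hne (congrArg hi h), fun h => h.1 hx.symm,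
      fun h => hc.1 (hx.trans h), fun h => hc.2.1 (hx.trans h), fun (h : {x, z} = w'.lo) => ?_,
      fun (h : {x, z} = w'.hi) => ?_⟩
    · have := congrArg card h
      rw [hy, card_pair hzx.symm, card_singleton] at this
      omega
    · have hy' : y ∈ ({x, z} : Finset V) := h ▸ w'.lo_sub (hy ▸ mem_singleton_self y)
      rcases mem_insert.mp hy' with rfl | hyz
      · exact hyx rfl
      · rw [mem_singleton.mp hyz] at hhi
        exact hne hhi.symm
  · have hyx_face : K.faces {y, x} := by rw [pair_comm, ← hhi]; exact w.hi_face
    have hyx_hi : ({y, x} : Finset V) = w.hi := by rw [pair_comm, hhi]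
    refine ⟨edgePair K y x hyx hyx_face,
      fun h => hyx (singleton_inj.mp ((congrArg lo h).trans hx)), fun h => h.2.2.2 hyx_hi,
      Ne.symm hy, fun (h : {y} = w'.hi) => ?_, fun h => hc.2.2.1 (hyx_hi.symm.trans h),
      fun h => hc.2.2.2 (hyx_hi.symm.trans h)⟩
    have := w'.two_le_card_hi
    rw [← h, card_singleton] at this
    omega

lemma exists_ne_not_compatible_compatible (hdeg : ∀ x : V, K.faces {x} → 2 ≤ sdeg K x)
    (hc : Compatible w w') : ∃ p, p ≠ w ∧ ¬ Compatible p w ∧ Compatible p w' := by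
  classical
  obtain h1 | h2 : w.lo.card = 1 ∨ 2 ≤ w.lo.card := by
    have := (K.nonempty_of_faces w.lo_face).card_pos
    omega
  · exact exists_ne_not_compatible_compatible_of_card_lo_eq_one hdeg hc h1
  · exact exists_ne_not_compatible_compatible_of_two_le_card_lo hc h2

end VPair

namespace MorseComplex

variable {V : Type*} {K : SComplex V}

lemma compatible_of_faces {S : Finset (VPair K)} (hS : (MorseComplex K).faces S) {p q : VPair K}
    (hp : p ∈ S) (hq : q ∈ S) (hpq : p ≠ q) : p.Compatible q :=
  hS.2.1 p hp q hq hpq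

lemma faces_singleton (p : VPair K) : (MorseComplex K).faces {p} := by
  refine ⟨singleton_nonempty p, fun a ha b hb hab => absurd ((mem_singleton.mp ha).trans
    (mem_singleton.mp hb).symm) hab, ?_⟩
  rintro ⟨k, -, c, hc, hpath⟩
  have hc : ∀ i, c i = p := fun i => mem_singleton.mp (hc i)
  exact (hpath 0).2.1 (by rw [hc, hc])

lemma isDVF_pair {p q : VPair K} (hc : p.Compatible q) :
    IsDVF {r | r ∈ ({p, q} : Finset (VPair K))} := by
  intro a ha b hb hab
  simp only [Set.mem_ofPred_eq, mem_insert, mem_singleton] at ha hb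
  rcases ha with rfl | rfl <;> rcases hb with rfl | rfl
  exacts [absurd rfl hab, hc, hc.symm, absurd rfl hab]

/-- Two steps `a → b → a` of a `V`-path would make `a.hi` and `b.hi` both equal to
`a.lo ∪ b.lo`. -/
lemma not_hasClosedPath_pair {p q : VPair K} (hc : p.Compatible q) :
    ¬ HasClosedPath {r | r ∈ ({p, q} : Finset (VPair K))} := by
  classical
  rintro ⟨k, -, c, hmem', hpath⟩
  have hmem : ∀ i, c i = p ∨ c i = q := by simpa using hmem'
  have hstep : ∀ i, c (i + 1) ≠ c i := fun i h => (hpath i).2.1 (by rw [h])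
  have hback : c (0 + 1 + 1) = c 0 := by
    have h₀₁ := hstep 0
    have h₁₂ := hstep (0 + 1)
    rcases hmem 0 with h0 | h0 <;> rcases hmem (0 + 1) with h1 | h1 <;>
      rcases hmem (0 + 1 + 1) with h2 | h2 <;> grind
  have hcomp := isDVF_pair hc _ (hmem' 0) _ (hmem' (0 + 1)) (hstep 0).symm
  obtain ⟨hsub₁, hne, hcard₁⟩ := hpath 0
  obtain ⟨hsub₂, -, hcard₂⟩ := hpath (0 + 1)
  rw [hback] at hsub₂ hcard₂
  have hlo : (c 0).lo.card = (c (0 + 1)).lo.card := by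
    have := (c 0).card_eq; omega
  have h₀ := eq_union_of_card_eq_succ (c 0).lo_sub hsub₁ hne.symm hlo (c 0).card_eq
  have h₁ := eq_union_of_card_eq_succ (c (0 + 1)).lo_sub hsub₂ hne hlo.symm
    (c (0 + 1)).card_eq
  exact hcomp.2.2.2 (by rw [h₀, h₁, union_comm])

lemma faces_pair {p q : VPair K} (hc : p.Compatible q) : (MorseComplex K).faces {p, q} :=
  ⟨insert_nonempty p {q}, isDVF_pair hc, not_hasClosedPath_pair hc⟩

lemma not_dominates [Finite V] (hdeg : ∀ x : V, K.faces {x} → 2 ≤ sdeg K x) {w w' : VPair K}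
    (hne : w ≠ w') : ¬ Dominates (MorseComplex K) w w' := by
  intro hdom
  by_cases hc : w.Compatible w'
  · obtain ⟨p, hpw, hconflict, hpw'⟩ := VPair.exists_ne_not_compatible_compatible hdeg hc
    have := hdom.insert_faces (faces_pair hpw'.symm) (mem_insert_self w' {p})
    exact hconflict (compatible_of_faces this (by simp) (mem_insert_self w _) hpw)
  · have := hdom.insert_faces (faces_singleton w') (mem_singleton_self w')
    exact hc (compatible_of_faces this (mem_insert_self w _) (by simp) hne)

lemma minimalComplex [Finite V] (hdeg : ∀ x : V, K.faces {x} → 2 ≤ sdeg K x) :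
    MinimalComplex (MorseComplex K) :=
  fun _ _ _ _ hne => not_dominates hdeg hne

end MorseComplex

/-- if every vertex of `K` has degree at least 2, then `M(K)` is
minimal; in particular it is not strongly collapsible. -/
theorem stmt_1 {V : Type*} [Fintype V] (K : SComplex V)
    (h : ∀ x : V, K.faces {x} → 2 ≤ sdeg K x) :
    MinimalComplex (MorseComplex K) ∧ ¬ StronglyCollapsible (MorseComplex K) := by
  have hmin := MorseComplex.minimalComplex h
  refine ⟨hmin, hmin.not_stronglyCollapsible fun v _ => ?_⟩
  obtain ⟨p, hp⟩ := v.exists_ne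
  exact ⟨p, MorseComplex.faces_singleton p, hp⟩
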